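/- arXiv:1301.4055 — 3 statements merged into one kernel-verified Lean document; each statement's English description precedes it below -/
import Mathlib

section
/- A heat-bath Markov chain has no negative eigenvalues: if P = Σ_{a∈L} ρ(a) P_a where each P_a is the heat-bath matrix associated with a partition of Ω containing each state in its own block, with respect to a positive distribution π, then all real eigenvalues of P are nonnegative. -/
theorem stmt_5 {Ω L : Type*} [Fintype Ω] [DecidableEq Ω] [Fintype L] [Nonempty L]
    (π : Ω → ℝ) (hπ : ∀ x, 0 < π x ∧ π x ≤ 1) (hπs : ∑ x, π x = 1)
    (ρ : L → ℝ) (hρ : ∀ a, 0 ≤ ρ a) (hρs : ∑ a, ρ a = 1)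
    (B : Ω → L → Finset Ω) (hmem : ∀ x a, x ∈ B x a)
    (hpart : ∀ a x y, y ∈ B x a → B x a = B y a)
    (P : Matrix Ω Ω ℝ)
    (hP : ∀ x y, P x y = ∑ a, ρ a * (if y ∈ B x a then π y / (∑ z ∈ B x a, π z) else 0))
    (μ : ℝ) (v : Ω → ℝ) (hv : v ≠ 0) (heig : P.mulVec v = μ • v) :
    0 ≤ μ := by
  classical
  set W : L → Ω → ℝ := fun a x => ∑ z ∈ B x a, π z with hW
  set S : L → Ω → ℝ := fun a x => ∑ z ∈ B x a, π z * v z with hS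
  have hWpos : ∀ a x, 0 < W a x :=
    fun a x => Finset.sum_pos' (fun z _ => (hπ z).1.le) ⟨x, hmem x a, (hπ x).1⟩
  have hsym : ∀ a x y, y ∈ B x a ↔ x ∈ B y a := by
    intro a x y
    constructor <;> intro h
    · rw [← hpart a x y h]; exact hmem x a
    · rw [← hpart a y x h]; exact hmem y a
  have hWc : ∀ a x y, y ∈ B x a → W a x = W a y := by
    intro a x y h; simp only [hW]; rw [hpart a x y h]
  have hSc : ∀ a x y, y ∈ B x a → S a x = S a y := by
    intro a x y h; simp only [hS]; rw [hpart a x y h]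
  set f : L → Ω → ℝ := fun a x => S a x / W a x with hf
  have hfc : ∀ a x y, y ∈ B x a → f a x = f a y := by
    intro a x y h; simp only [hf]; rw [hWc a x y h, hSc a x y h]
  -- key averaging lemma
  have key : ∀ (a : L) (g : Ω → ℝ), (∀ x y, y ∈ B x a → g x = g y) →
      ∑ x, π x * g x * f a x = ∑ x, π x * g x * v x := by
    intro a g hg
    have step1 : ∀ x : Ω, π x * g x * f a x
        = ∑ y : Ω, (if y ∈ B x a then π x * g x * (π y * v y) / W a x else 0) := by
      intro x
      rw [Finset.sum_ite_mem, Finset.univ_inter]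
      simp only [hf, hS]
      rw [Finset.sum_div, Finset.mul_sum]
      congr 1; ext y
      ring
    calc ∑ x, π x * g x * f a x
        = ∑ x : Ω, ∑ y : Ω, (if y ∈ B x a then π x * g x * (π y * v y) / W a x else 0) := by
          exact Finset.sum_congr rfl (fun x _ => step1 x)
      _ = ∑ y : Ω, ∑ x : Ω, (if x ∈ B y a then π x * g x * (π y * v y) / W a x else 0) := by
          rw [Finset.sum_comm]
          refine Finset.sum_congr rfl fun x _ => Finset.sum_congr rfl fun y _ => ?_
          simp only [hsym a x y]
      _ = ∑ y : Ω, π y * g y * v y := by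
          refine Finset.sum_congr rfl fun y _ => ?_
          rw [Finset.sum_ite_mem, Finset.univ_inter]
          have : ∀ x ∈ B y a, π x * g x * (π y * v y) / W a x
              = (π y * v y * g y / W a y) * π x := by
            intro x hx
            rw [hg y x hx, hWc a y x hx]
            ring
          rw [Finset.sum_congr rfl this, ← Finset.mul_sum]
          have : ∑ x ∈ B y a, π x = W a y := rfl
          rw [this]
          rw [div_mul_cancel₀ _ (hWpos a y).ne']; ring
    -- done
  have hPv : ∀ x, P.mulVec v x = ∑ a, ρ a * f a x := by
    intro x
    unfold Matrix.mulVec dotProduct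
    simp only [hP, Finset.sum_mul]
    rw [Finset.sum_comm]
    refine Finset.sum_congr rfl fun a _ => ?_
    simp only [mul_assoc, ← Finset.mul_sum]
    congr 1
    simp only [ite_mul, zero_mul]
    rw [Finset.sum_ite_mem, Finset.univ_inter]
    simp only [hf, hS, hW]
    rw [Finset.sum_div]
    refine Finset.sum_congr rfl fun y _ => ?_
    ring
  set N : ℝ := ∑ x, π x * v x * v x with hN
  have hNpos : 0 < N := by
    obtain ⟨x, hx⟩ := Function.ne_iff.mp hv
    refine Finset.sum_pos' (fun z _ => ?_) ⟨x, Finset.mem_univ x, ?_⟩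
    · have := mul_self_nonneg (v z)
      nlinarith [(hπ z).1]
    · have : 0 < v x * v x := mul_self_pos.mpr hx
      nlinarith [(hπ x).1]
  have hmain : μ * N = ∑ a, ρ a * ∑ x, π x * f a x * f a x := by
    have h1 : ∑ x, π x * v x * (P.mulVec v x) = μ * N := by
      rw [heig]
      simp only [Pi.smul_apply, smul_eq_mul, hN, Finset.mul_sum]
      refine Finset.sum_congr rfl fun x _ => ?_
      ring
    rw [← h1]
    calc ∑ x, π x * v x * (P.mulVec v x)
        = ∑ x, ∑ a, ρ a * (π x * v x * f a x) := by
          refine Finset.sum_congr rfl fun x _ => ?_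
          rw [hPv x, Finset.mul_sum]
          refine Finset.sum_congr rfl fun a _ => ?_
          ring
      _ = ∑ a, ρ a * ∑ x, π x * v x * f a x := by
          rw [Finset.sum_comm]
          refine Finset.sum_congr rfl fun a _ => ?_
          rw [Finset.mul_sum]
      _ = ∑ a, ρ a * ∑ x, π x * f a x * f a x := by
          refine Finset.sum_congr rfl fun a _ => ?_
          congr 1
          have := key a (f a) (hfc a)
          rw [this]
          refine Finset.sum_congr rfl fun x _ => ?_
          ring
  have hrhs : 0 ≤ ∑ a, ρ a * ∑ x, π x * f a x * f a x := by
    refine Finset.sum_nonneg fun a _ => mul_nonneg (hρ a) ?_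
    refine Finset.sum_nonneg fun x _ => ?_
    have := mul_self_nonneg (f a x)
    nlinarith [(hπ x).1]
  nlinarith [hmain, hrhs, hNpos]
end

section
/- Transfer of positive semidefiniteness: suppose P = R T R*, where R is a nonnegative Ω×Ω' matrix with all row sums 1 and πR = μ, T is a transition matrix on Ω' reversible with respect to μ whose symmetrization is positive semidefinite, and R*(y,x) = (π(x)/μ(y))R(x,y). Then P is reversible with respect to π and all eigenvalues of P are nonnegative. -/
/-!
An eigenpair `(λ, v)` of `P` gives `λ ∑ π v² = vᵀ (diagonal π * P) v`, and reversibility of `P`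
says that `diagonal π * P` is symmetric; so it suffices that `diagonal π * P` is positive
semidefinite. Since `R* = diagonal μ⁻¹ * Rᵀ * diagonal π`, it is the congruence
`B (diagonal μ * T) Bᵀ` with `B = diagonal π * R * diagonal μ⁻¹`. Finally `diagonal μ * T` is
positive semidefinite: with `s = √μ`, the matrix `diagonal s * T * diagonal s⁻¹` is symmetric by
reversibility of `T` and similar to `T`, hence has nonnegative eigenvalues.
-/

open Matrix

namespace Matrix

variable {n m : Type*} [Fintype n] [DecidableEq n] [Fintype m] [DecidableEq m]

def EigenvaluesNonneg (A : Matrix n n ℝ) : Prop :=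
  ∀ (t : ℝ) (v : n → ℝ), v ≠ 0 → A *ᵥ v = t • v → 0 ≤ t

lemma diagonal_inv_mul_diagonal {α : Type*} [DivisionSemiring α] {s : n → α} (hs : ∀ i, s i ≠ 0) :
    diagonal s⁻¹ * diagonal s = 1 := by
  rw [diagonal_mul_diagonal, ← diagonal_one]
  exact congrArg diagonal (funext fun i => inv_mul_cancel₀ (hs i))

lemma isHermitian_diagonal_mul_iff {w : n → ℝ} {A : Matrix n n ℝ} :
    (diagonal w * A).IsHermitian ↔ ∀ i j, w i * A i j = w j * A j i := by
  simp only [IsHermitian.ext_iff, diagonal_mul, star_trivial]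
  exact ⟨fun h i j => (h i j).symm, fun h i j => (h i j).symm⟩

lemma IsHermitian.posSemidef_of_eigenvaluesNonneg {A : Matrix n n ℝ} (hA : A.IsHermitian)
    (h : A.EigenvaluesNonneg) : A.PosSemidef :=
  hA.posSemidef_iff_eigenvalues_nonneg.mpr fun j =>
    h _ _ ((WithLp.ofLp_eq_zero 2).ne.2 <| hA.eigenvectorBasis.orthonormal.ne_zero j)
      (hA.mulVec_eigenvectorBasis j)

lemma EigenvaluesNonneg.diagonal_mul_mul_diagonal_inv {A : Matrix n n ℝ} (h : A.EigenvaluesNonneg)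
    {s : n → ℝ} (hs : ∀ i, s i ≠ 0) : (diagonal s * A * diagonal s⁻¹).EigenvaluesNonneg := by
  intro t v hv hAv
  refine h t (diagonal s⁻¹ *ᵥ v) ?_ ?_
  · intro h0
    apply hv
    funext i
    simpa [mulVec_diagonal, hs i] using congrFun h0 i
  · calc A *ᵥ (diagonal s⁻¹ *ᵥ v)
        = diagonal s⁻¹ *ᵥ ((diagonal s * A * diagonal s⁻¹) *ᵥ v) := by
          simp only [mulVec_mulVec, ← Matrix.mul_assoc, diagonal_inv_mul_diagonal hs,
            Matrix.one_mul]
      _ = t • (diagonal s⁻¹ *ᵥ v) := by rw [hAv, mulVec_smul]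

lemma posSemidef_diagonal_mul_of_eigenvaluesNonneg {w : n → ℝ} (hw : ∀ i, 0 < w i)
    {A : Matrix n n ℝ} (hsymm : (diagonal w * A).IsHermitian) (hA : A.EigenvaluesNonneg) :
    (diagonal w * A).PosSemidef := by
  set s : n → ℝ := fun i => √(w i)
  have hs : ∀ i, s i ≠ 0 := fun i => (Real.sqrt_pos.mpr (hw i)).ne'
  have hss : diagonal s * diagonal s = diagonal w := by
    rw [diagonal_mul_diagonal]
    exact congrArg diagonal (funext fun i => Real.mul_self_sqrt (hw i).le)
  have hinv := diagonal_inv_mul_diagonal hs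
  set S := diagonal s * A * diagonal s⁻¹
  have hS : S = (diagonal s⁻¹)ᴴ * (diagonal w * A) * diagonal s⁻¹ := by
    rw [diagonal_conjTranspose, star_trivial, ← hss]
    simp only [S, ← Matrix.mul_assoc, hinv, Matrix.one_mul]
  have hSpsd : S.PosSemidef := by
    refine IsHermitian.posSemidef_of_eigenvaluesNonneg ?_ (hA.diagonal_mul_mul_diagonal_inv hs)
    rw [hS]
    exact isHermitian_conjTranspose_mul_mul _ hsymm
  have hfactor : diagonal w * A = (diagonal s)ᴴ * S * diagonal s := by
    simp only [S, diagonal_conjTranspose, star_trivial, Matrix.mul_assoc, hinv, Matrix.mul_one]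
    rw [← Matrix.mul_assoc, hss]
  rw [hfactor]
  exact hSpsd.conjTranspose_mul_mul_same _

lemma PosSemidef.eigenvaluesNonneg_of_diagonal_mul {w : n → ℝ} (hw : ∀ i, 0 < w i)
    {A : Matrix n n ℝ} (hA : (diagonal w * A).PosSemidef) : A.EigenvaluesNonneg := by
  intro t v hv hAv
  have hquad := hA.dotProduct_mulVec_nonneg v
  rw [← mulVec_mulVec, hAv, mulVec_smul, dotProduct_smul, smul_eq_mul] at hquad
  exact nonneg_of_mul_nonneg_left hquad ((posDef_diagonal_iff.mpr hw).dotProduct_mulVec_pos hv)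

lemma PosSemidef.diagonal_mul_mul_mul_adjoint {μ : m → ℝ} {T : Matrix m m ℝ}
    (hT : (diagonal μ * T).PosSemidef) (hμ : ∀ y, μ y ≠ 0) (π : n → ℝ) (R : Matrix n m ℝ) :
    (diagonal π * (R * T * (diagonal μ⁻¹ * Rᵀ * diagonal π))).PosSemidef := by
  convert hT.mul_mul_conjTranspose_same (diagonal π * R * diagonal μ⁻¹) using 1
  simp only [conjTranspose_eq_transpose_of_trivial, transpose_mul, diagonal_transpose,
    Matrix.mul_assoc]
  rw [← Matrix.mul_assoc (diagonal μ⁻¹) (diagonal μ), diagonal_inv_mul_diagonal hμ, Matrix.one_mul]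

end Matrix

theorem stmt_16_general {Ω Ω' : Type*} [Fintype Ω] [DecidableEq Ω] [Fintype Ω'] [DecidableEq Ω']
    (π : Ω → ℝ) (hπ : ∀ x, 0 < π x)
    (μ : Ω' → ℝ) (hμ : ∀ y, 0 < μ y)
    (R : Matrix Ω Ω' ℝ)
    (Rstar : Matrix Ω' Ω ℝ)
    (hRstar : ∀ y x, Rstar y x = π x * R x y / μ y)
    (T : Matrix Ω' Ω' ℝ)
    (hTrev : ∀ y z, μ y * T y z = μ z * T z y)
    (hTpsd : ∀ (lam : ℝ) (v : Ω' → ℝ), v ≠ 0 → T.mulVec v = lam • v → 0 ≤ lam)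
    (P : Matrix Ω Ω ℝ) (hP : P = R * T * Rstar) :
    (∀ x y, π x * P x y = π y * P y x) ∧
    (∀ (lam : ℝ) (v : Ω → ℝ), v ≠ 0 → P.mulVec v = lam • v → 0 ≤ lam) := by
  have hRstar_eq : Rstar = diagonal μ⁻¹ * Rᵀ * diagonal π := by
    ext y x
    rw [hRstar, mul_diagonal, diagonal_mul, transpose_apply, Pi.inv_apply]
    ring
  have hμT : (diagonal μ * T).PosSemidef :=
    posSemidef_diagonal_mul_of_eigenvaluesNonneg hμ (isHermitian_diagonal_mul_iff.mpr hTrev) hTpsd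
  have hPpsd : (diagonal π * P).PosSemidef := by
    rw [hP, hRstar_eq]
    exact hμT.diagonal_mul_mul_mul_adjoint (fun y => (hμ y).ne') π R
  exact ⟨isHermitian_diagonal_mul_iff.mp hPpsd.isHermitian,
    hPpsd.eigenvaluesNonneg_of_diagonal_mul hπ⟩

theorem stmt_16 {Ω Ω' : Type*} [Fintype Ω] [DecidableEq Ω] [Fintype Ω'] [DecidableEq Ω']
    (π : Ω → ℝ) (hπ : ∀ x, 0 < π x) (hπs : ∑ x, π x = 1)
    (μ : Ω' → ℝ) (hμ : ∀ y, 0 < μ y) (hμs : ∑ y, μ y = 1)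
    (R : Matrix Ω Ω' ℝ) (hRnn : ∀ x y, 0 ≤ R x y)
    (hRrow : ∀ x, ∑ y, R x y = 1)
    (hπR : ∀ y, ∑ x, π x * R x y = μ y)
    (Rstar : Matrix Ω' Ω ℝ)
    (hRstar : ∀ y x, Rstar y x = π x * R x y / μ y)
    (T : Matrix Ω' Ω' ℝ) (hTnn : ∀ y z, 0 ≤ T y z) (hTrow : ∀ y, ∑ z, T y z = 1)
    (hTrev : ∀ y z, μ y * T y z = μ z * T z y)
    (hTpsd : ∀ (lam : ℝ) (v : Ω' → ℝ), v ≠ 0 → T.mulVec v = lam • v → 0 ≤ lam)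
    (P : Matrix Ω Ω ℝ) (hP : P = R * T * Rstar) :
    (∀ x y, π x * P x y = π y * P y x) ∧
    (∀ (lam : ℝ) (v : Ω → ℝ), v ≠ 0 → P.mulVec v = lam • v → 0 ≤ lam) :=
  stmt_16_general π hπ μ hμ R Rstar hRstar T hTrev hTpsd P hP
end

section
/- For the single-site heat-bath chain on a spin system, the transition matrix P defined by P(σ,τ) = (1/|V|) Σ_{v∈V} 1(τ ∈ Ω_{σ,v}) π(τ)/π(Ω_{σ,v}), where Ω_{σ,v} = {σ^{v,k} : k ∈ S, σ^{v,k} ∈ Ω}, has no negative real eigenvalues. -/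
private lemma aux_mem_self {V S : Type*} [Fintype V] [DecidableEq V] [Fintype S] [DecidableEq S]
    (Ω : Finset (V → S)) (B : (V → S) → V → Finset (V → S))
    (hB : ∀ σ v, B σ v = Ω.filter (fun τ => ∃ k : S, τ = Function.update σ v k))
    {σ : V → S} (hσ : σ ∈ Ω) (v : V) : σ ∈ B σ v := by
  rw [hB]
  exact Finset.mem_filter.2 ⟨hσ, ⟨σ v, (Function.update_eq_self v σ).symm⟩⟩

private lemma aux_class_eq {V S : Type*} [Fintype V] [DecidableEq V] [Fintype S] [DecidableEq S]
    (Ω : Finset (V → S)) (B : (V → S) → V → Finset (V → S))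
    (hB : ∀ σ v, B σ v = Ω.filter (fun τ => ∃ k : S, τ = Function.update σ v k))
    {σ τ : V → S} {v : V} (hτ : τ ∈ B σ v) : B τ v = B σ v := by
  rw [hB] at hτ
  obtain ⟨-, k₀, rfl⟩ := Finset.mem_filter.1 hτ
  rw [hB, hB]
  apply Finset.filter_congr
  intro x _
  constructor
  · rintro ⟨k, rfl⟩
    exact ⟨k, by rw [Function.update_idem]⟩
  · rintro ⟨k, rfl⟩
    exact ⟨k, by rw [Function.update_idem]⟩

private lemma aux_Tv {V S : Type*} [Fintype V] [DecidableEq V] [Fintype S] [DecidableEq S]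
    (Ω : Finset (V → S)) (π : (V → S) → ℝ) (hπ : ∀ σ ∈ Ω, 0 < π σ)
    (B : (V → S) → V → Finset (V → S))
    (hB : ∀ σ v, B σ v = Ω.filter (fun τ => ∃ k : S, τ = Function.update σ v k))
    (a : (V → S) → ℝ) (v : V) :
    0 ≤ ∑ σ ∈ Ω, ∑ τ ∈ Ω,
      (if τ ∈ B σ v then a σ * a τ / (∑ z ∈ B σ v, π z) else 0) := by
  classical
  have hBsub : ∀ σ, B σ v ⊆ Ω := fun σ => by rw [hB]; exact Finset.filter_subset _ _
  have h1 : ∀ σ ∈ Ω, (∑ τ ∈ Ω, (if τ ∈ B σ v then a σ * a τ / (∑ z ∈ B σ v, π z) else 0))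
      = (a σ / (∑ z ∈ B σ v, π z)) * ∑ τ ∈ B σ v, a τ := by
    intro σ _
    rw [Finset.sum_ite_mem, Finset.inter_eq_right.2 (hBsub σ), Finset.mul_sum]
    exact Finset.sum_congr rfl fun τ _ => by ring
  rw [Finset.sum_congr rfl h1]
  rw [← Finset.sum_fiberwise_of_maps_to (fun σ hσ => Finset.mem_image_of_mem (fun σ => B σ v) hσ)
    (fun σ => (a σ / (∑ z ∈ B σ v, π z)) * ∑ τ ∈ B σ v, a τ)]
  apply Finset.sum_nonneg
  intro C hC
  obtain ⟨σ₀, hσ₀, rfl⟩ := Finset.mem_image.1 hC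
  have hfilt : Ω.filter (fun σ => B σ v = B σ₀ v) = B σ₀ v := by
    ext x
    simp only [Finset.mem_filter]
    constructor
    · rintro ⟨hxΩ, hx⟩
      rw [← hx]; exact aux_mem_self Ω B hB hxΩ v
    · intro hx
      exact ⟨hBsub σ₀ hx, aux_class_eq Ω B hB hx⟩
  rw [hfilt]
  have hclass : ∀ σ ∈ B σ₀ v, B σ v = B σ₀ v := fun σ hσ => aux_class_eq Ω B hB hσ
  have h2 : ∀ σ ∈ B σ₀ v, (a σ / (∑ z ∈ B σ v, π z)) * ∑ τ ∈ B σ v, a τ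
      = a σ * ((∑ τ ∈ B σ₀ v, a τ) / (∑ z ∈ B σ₀ v, π z)) := by
    intro σ hσ
    rw [hclass σ hσ]; ring
  rw [Finset.sum_congr rfl h2, ← Finset.sum_mul]
  rw [← mul_div_assoc]
  exact div_nonneg (mul_self_nonneg _)
    (Finset.sum_nonneg fun z hz => (hπ z (hBsub σ₀ hz)).le)

theorem stmt_19 {V S : Type*} [Fintype V] [DecidableEq V] [Fintype S] [DecidableEq S]
    [Nonempty V] [Nonempty S]
    (Ω : Finset (V → S)) (hΩ : Ω.Nonempty)
    (π : (V → S) → ℝ) (hπ : ∀ σ ∈ Ω, 0 < π σ ∧ π σ ≤ 1)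
    (hπs : ∑ σ ∈ Ω, π σ = 1)
    (B : (V → S) → V → Finset (V → S))
    (hB : ∀ σ v, B σ v = Ω.filter (fun τ => ∃ k : S, τ = Function.update σ v k))
    (P : Matrix {σ // σ ∈ Ω} {σ // σ ∈ Ω} ℝ)
    (hP : ∀ σ τ : {σ // σ ∈ Ω}, P σ τ =
      (1 / (Fintype.card V : ℝ)) * ∑ v : V,
        (if (τ : V → S) ∈ B σ v then π τ / (∑ z ∈ B σ v, π z) else 0))
    (lam : ℝ) (w : {σ // σ ∈ Ω} → ℝ) (hw : w ≠ 0) (heig : P.mulVec w = lam • w) :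
    0 ≤ lam := by
  classical
  set ww : (V → S) → ℝ := fun x => if h : x ∈ Ω then w ⟨x, h⟩ else 0 with hwwdef
  have hww : ∀ σ : {σ // σ ∈ Ω}, ww ↑σ = w σ := by
    intro σ; simp [hwwdef, σ.2]
  set a : (V → S) → ℝ := fun x => π x * ww x with hadef
  set N : ℝ := ∑ σ : {σ // σ ∈ Ω}, π ↑σ * (w σ * w σ) with hN
  have hNpos : 0 < N := by
    obtain ⟨σ₀, hσ₀⟩ : ∃ σ, w σ ≠ 0 := by
      by_contra h; push_neg at h; exact hw (funext h)
    apply Finset.sum_pos'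
    · intro i _
      exact mul_nonneg (hπ i i.2).1.le (mul_self_nonneg _)
    · exact ⟨σ₀, Finset.mem_univ _,
        mul_pos (hπ σ₀ σ₀.2).1 (mul_self_pos.2 hσ₀)⟩
  set E : ℝ := ∑ σ : {σ // σ ∈ Ω}, π ↑σ * w σ * (P.mulVec w σ) with hE
  have hE1 : E = lam * N := by
    rw [hE, hN, heig, Finset.mul_sum]
    exact Finset.sum_congr rfl fun σ _ => by
      simp only [Pi.smul_apply, smul_eq_mul]; ring
  have hE2 : 0 ≤ E := by
    have hterm : ∀ σ τ : {σ // σ ∈ Ω}, π ↑σ * w σ * (P σ τ * w τ)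
        = ∑ v : V, (1 / (Fintype.card V : ℝ)) *
          (if (τ : V → S) ∈ B ↑σ v then a ↑σ * a ↑τ / (∑ z ∈ B ↑σ v, π z) else 0) := by
      intro σ τ
      rw [hP, Finset.mul_sum, Finset.sum_mul, Finset.mul_sum]
      apply Finset.sum_congr rfl
      intro v _
      simp only [hadef, hww]
      split_ifs with h
      · ring
      · ring
    have hE3 : E = ∑ v : V, ∑ σ ∈ Ω, ∑ τ ∈ Ω, (1 / (Fintype.card V : ℝ)) *
        (if τ ∈ B σ v then a σ * a τ / (∑ z ∈ B σ v, π z) else 0) := by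
      rw [hE]
      simp only [Matrix.mulVec, dotProduct, Finset.mul_sum]
      rw [Finset.sum_congr rfl fun σ _ => Finset.sum_congr rfl fun τ _ => hterm σ τ]
      rw [Finset.sum_congr rfl fun σ (_ : σ ∈ Finset.univ) => Finset.sum_comm]
      rw [Finset.sum_comm]
      apply Finset.sum_congr rfl
      intro v _
      rw [← Finset.sum_coe_sort Ω (fun σ => ∑ τ ∈ Ω, (1 / (Fintype.card V : ℝ)) *
        (if τ ∈ B σ v then a σ * a τ / (∑ z ∈ B σ v, π z) else 0))]
      apply Finset.sum_congr rfl
      intro σ _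
      rw [← Finset.sum_coe_sort Ω (fun τ => (1 / (Fintype.card V : ℝ)) *
        (if τ ∈ B (↑σ) v then a ↑σ * a τ / (∑ z ∈ B (↑σ) v, π z) else 0))]
    rw [hE3]
    apply Finset.sum_nonneg
    intro v _
    simp only [← Finset.mul_sum]
    exact mul_nonneg (by positivity) (aux_Tv Ω π (fun σ hσ => (hπ σ hσ).1) B hB a v)
  by_contra h
  push_neg at h
  have := mul_neg_of_neg_of_pos h hNpos
  linarith [hE1 ▸ hE2]
end
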